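/- For every type σ: if Enum_σ and Rep_σ hold, then All_σ holds; that is, if (i) for every variable x : σ the formula ⋁_{a∈Bσ} (↓σ a) ≐σ x is deducible, and (ii) for all finite sets A of formulas, all terms s, t : σ and every context C admissible for A, A ⊢ s ≐σ t and A ⊢ C[s] imply A ⊢ C[t], then for all variables f : σB and x : σ we have {∀σ f} ⊢ f x. -/
import Mathlib


namespace PTT


/-- Simple types over a single base type `B`. -/
inductive Ty : Type
  | base : Ty
  | arrow : Ty → Ty → Ty
deriving DecidableEq

/-- Names: the constants `⊥` and `→`, and variables (an index together with a type). -/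
inductive Name : Type
  | bot : Name
  | imp : Name
  | var : ℕ → Ty → Name
deriving DecidableEq

/-- The type of a name. -/
def Name.ty : Name → Ty
  | .bot => .base
  | .imp => .arrow .base (.arrow .base .base)
  | .var _ σ => σ

/-- Terms: names, abstraction over a variable, application. -/
inductive Tm : Type
  | name : Name → Tm
  | lam : ℕ → Ty → Tm → Tm
  | app : Tm → Tm → Tm
deriving DecidableEq

/-- The term `⊥`. -/
def botTm : Tm := .name .bot

/-- The variable `(n, σ)` as a term. -/
def vr (n : ℕ) (σ : Ty) : Tm := .name (.var n σ)

/-- Implication `s → t`. -/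
def impTm (s t : Tm) : Tm := .app (.app (.name .imp) s) t

/-- `⊤ := ⊥ → ⊥`. -/
def topTm : Tm := impTm botTm botTm

/-- `¬ s := s → ⊥`. -/
def negTm (s : Tm) : Tm := impTm s botTm

/-- `s ∨ t := (s → t) → t`. -/
def orTm (s t : Tm) : Tm := impTm (impTm s t) t

/-- `s ∧ t := ¬(¬s ∨ ¬t)`. -/
def andTm (s t : Tm) : Tm := negTm (orTm (negTm s) (negTm t))

/-- `s ≡ t := (s → t) ∧ (t → s)`. -/
def equivTm (s t : Tm) : Tm := andTm (impTm s t) (impTm t s)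

/-- The typing relation. -/
inductive HasTy : Tm → Ty → Prop
  | name (x : Name) : HasTy (.name x) x.ty
  | lam {n σ s τ} : HasTy s τ → HasTy (.lam n σ s) (.arrow σ τ)
  | app {s t σ τ} : HasTy s (.arrow σ τ) → HasTy t σ → HasTy (.app s t) τ

/-- Free variables of a term. -/
def fv : Tm → Finset (ℕ × Ty)
  | .name (.var n σ) => {(n, σ)}
  | .name _ => ∅
  | .lam n σ s => (fv s).erase (n, σ)
  | .app s t => fv s ∪ fv t

/-- A term is closed if it has no free variables. -/
def Closed (s : Tm) : Prop := fv s = ∅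

/-- Capture-free parallel substitution (bound variables are renamed). -/
def substAux (ρ : ℕ × Ty → Tm) : Tm → Tm
  | .name (.var n σ) => ρ (n, σ)
  | .name x => .name x
  | .app s t => .app (substAux ρ s) (substAux ρ t)
  | .lam n σ s =>
      let used : Finset ℕ :=
        ((fv s).erase (n, σ)).biUnion (fun p => (fv (ρ p)).image Prod.fst)
      let m : ℕ := used.sup id + 1
      .lam m σ (substAux (Function.update ρ (n, σ) (vr m σ)) s)

/-- Capture-free substitution `s[(n,σ) := t]`. -/
def subst (s : Tm) (n : ℕ) (σ : Ty) (t : Tm) : Tm :=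
  substAux (Function.update (fun p => vr p.1 p.2) (n, σ) t) s

/-- Contexts: terms with exactly one hole (possibly under binders). -/
inductive Ctx : Type
  | hole : Ctx
  | lam : ℕ → Ty → Ctx → Ctx
  | appL : Ctx → Tm → Ctx
  | appR : Tm → Ctx → Ctx

/-- Filling the hole of a context with a term (capturing is allowed). -/
def Ctx.fill : Ctx → Tm → Tm
  | .hole, s => s
  | .lam n σ C, s => .lam n σ (C.fill s)
  | .appL C t, s => .app (C.fill s) t
  | .appR t C, s => .app t (C.fill s)

/-- `C` captures the variable `p` if the hole of `C` lies below a binder for `p`. -/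
def Ctx.captures : Ctx → ℕ × Ty → Prop
  | .hole, _ => False
  | .lam n σ C, p => p = (n, σ) ∨ C.captures p
  | .appL C _, p => C.captures p
  | .appR _ C, p => C.captures p

/-- `C` is admissible for `A` if it captures no variable free in `A`. -/
def Ctx.Admissible (C : Ctx) (A : Finset Tm) : Prop :=
  ∀ p ∈ A.biUnion fv, ¬ C.captures p

/-- `s` is a subterm of `t`. -/
def Subterm (s t : Tm) : Prop := ∃ C : Ctx, C.fill s = t

/-- β-redexes. -/
def IsBetaRedex : Tm → Prop
  | .app (.lam _ _ _) _ => True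
  | _ => False

/-- A term is β-normal if none of its subterms is a β-redex. -/
def BetaNormal (t : Tm) : Prop := ∀ s, Subterm s t → ¬ IsBetaRedex s

/-- Lambda equivalence: the least equivalence on well-typed terms containing
α-, β-, η-conversion and closed under arbitrary contexts. -/
inductive LamEq : Tm → Tm → Prop
  | refl {s σ} : HasTy s σ → LamEq s s
  | symm {s t} : LamEq s t → LamEq t s
  | trans {s t u} : LamEq s t → LamEq t u → LamEq s u
  | alpha {n m σ s τ} : HasTy (.lam n σ s) τ → (m, σ) ∉ fv s →
      LamEq (.lam n σ s) (.lam m σ (subst s n σ (vr m σ)))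
  | beta {n σ s t τ} : HasTy (.app (.lam n σ s) t) τ →
      LamEq (.app (.lam n σ s) t) (subst s n σ t)
  | eta {n σ s τ} : HasTy (.lam n σ (.app s (vr n σ))) τ → (n, σ) ∉ fv s →
      LamEq (.lam n σ (.app s (vr n σ))) s
  | ctx {s t σ} (C : Ctx) : LamEq s t → HasTy (C.fill s) σ → LamEq (C.fill s) (C.fill t)

/-- The standard set-theoretic interpretation of types: `B` is interpreted as the
two truth values (`Bool`), functional types as full function spaces. -/
def Ty.sem : Ty → Type
  | .base => Bool
  | .arrow σ τ => σ.sem → τ.sem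

def Ty.semDefault : (σ : Ty) → σ.sem
  | .base => false
  | .arrow _ τ => fun _ => τ.semDefault

instance (σ : Ty) : Inhabited σ.sem := ⟨σ.semDefault⟩

noncomputable instance Ty.semFintype : (σ : Ty) → Fintype σ.sem
  | .base => inferInstanceAs (Fintype Bool)
  | .arrow σ τ =>
      letI := Ty.semFintype σ
      letI := Ty.semFintype τ
      letI := Classical.decEq σ.sem
      inferInstanceAs (Fintype (σ.sem → τ.sem))

def Ty.semCast {σ τ : Ty} (h : σ = τ) (v : σ.sem) : τ.sem := h ▸ v

/-- An interpretation assigns to every variable a value of the corresponding type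
(the constants `⊥` and `→` have their values fixed). -/
def Interp : Type := ℕ → (σ : Ty) → σ.sem

def Interp.update (I : Interp) (n : ℕ) (σ : Ty) (v : σ.sem) : Interp :=
  fun m τ => if h : m = n ∧ τ = σ then Ty.semCast h.2.symm v else I m τ

/-- Type inference. -/
def typeOf : Tm → Option Ty
  | .name x => some x.ty
  | .lam _ σ s => (typeOf s).map (Ty.arrow σ)
  | .app s t =>
      match typeOf s, typeOf t with
      | some (.arrow σ τ), some σ' => if σ = σ' then some τ else none
      | _, _ => none

/-- The canonical extension `Î` of an interpretation to all terms: `eval I s σ`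
is the value of `s` at type `σ` (on well-typed terms this is the usual
denotation; junk default values are used at type mismatches). -/
def eval (I : Interp) : Tm → (σ : Ty) → σ.sem
  | .name (.var n τ), σ => if h : τ = σ then Ty.semCast h (I n τ) else default
  | .name .bot, σ =>
      match σ with
      | .base => false
      | _ => default
  | .name .imp, σ =>
      match σ with
      | .arrow .base (.arrow .base .base) => fun a b => !a || b
      | _ => default
  | .app s t, σ =>
      match typeOf t with
      | some τ => eval I s (.arrow τ σ) (eval I t τ)
      | none => default
  | .lam n τ s, σ =>
      match σ with
      | .base => default
      | .arrow σ₁ σ₂ =>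
          if h : σ₁ = τ then
            fun a => eval (I.update n τ (Ty.semCast h a)) s σ₂
          else default

/-- `I` satisfies the formula `s` if `Î s = 1`. -/
def Satisfies (I : Interp) (s : Tm) : Prop := eval I s .base = true

/-- A formula is valid if every interpretation satisfies it. -/
def ValidFml (s : Tm) : Prop := ∀ I : Interp, Satisfies I s

/-- A sequent `A ⇒ s` is valid if every interpretation satisfying `A` satisfies `s`. -/
def ValidSeq (A : Finset Tm) (s : Tm) : Prop :=
  ∀ I : Interp, (∀ t ∈ A, Satisfies I t) → Satisfies I s

/-- Finite disjunction (the empty disjunction is `⊥`). -/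
def orList : List Tm → Tm
  | [] => botTm
  | [s] => s
  | s :: l => orTm s (orList l)

/-- Finite conjunction (the empty conjunction is `⊤`). -/
def andList : List Tm → Tm
  | [] => topTm
  | [s] => s
  | s :: l => andTm s (andList l)

/-- The argument types of a type (every type has the form `σ₁…σₙB`). -/
def Ty.args : Ty → List Ty
  | .base => []
  | .arrow σ τ => σ :: τ.args

/-- Tuples of values along a list of types. -/
def Tup : List Ty → Type
  | [] => PUnit
  | σ :: l => σ.sem × Tup l

noncomputable instance TupFintype : (l : List Ty) → Fintype (Tup l)
  | [] => inferInstanceAs (Fintype PUnit)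
  | σ :: l =>
      letI := TupFintype l
      inferInstanceAs (Fintype (σ.sem × Tup l))

/-- Applying a function value to a tuple of arguments (the result type is `B`). -/
def Ty.applyTup : (σ : Ty) → σ.sem → Tup σ.args → Bool
  | .base, a, _ => a
  | .arrow _ τ, f, p => τ.applyTup (f p.1) p.2

/-- Quote/identity data for each type in a list: a quote function and the term `≐`. -/
def ArgData : List Ty → Type
  | [] => PUnit
  | σ :: l => ((σ.sem → Tm) × Tm) × ArgData l

/-- The conjunction list `x_k ≐_{σ_k} (↓_{σ_k} b_k), …` for a tuple `b`. -/
def eqConj : (l : List Ty) → ArgData l → ℕ → Tup l → List Tm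
  | [], _, _, _ => []
  | σ :: l, (d, ds), k, (b, bs) =>
      (.app (.app d.2 (vr k σ)) (d.1 b)) :: eqConj l ds (k + 1) bs

/-- `λ x_k : σ_k. …` binding one variable for each type in the list. -/
def mkLams : (l : List Ty) → ℕ → Tm → Tm
  | [], _, body => body
  | σ :: l, k, body => .lam k σ (mkLams l (k + 1) body)

/-- The body of the quote term
`↓_{σ₁…σₙB} a := λx₁…xₙ. ⋁_{b₁…bₙ, a b₁…bₙ = 1} ⋀_j x_j ≐_{σ_j} (↓_{σ_j} b_j)`. -/
noncomputable def quoteBodyAux (σ : Ty) (ad : ArgData σ.args) (a : σ.sem) : Tm :=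
  mkLams σ.args 0 (orList
    ((((Finset.univ : Finset (Tup σ.args)).toList.filter
        (fun b => σ.applyTup a b))).map
      (fun b => andList (eqConj σ.args ad 0 b))))

/-- `∀σ := λf. ⋀_{a ∈ Bσ} f (↓σ a)`, given the quote function for `σ`. -/
noncomputable def allTmAux (σ : Ty) (q : σ.sem → Tm) : Tm :=
  .lam 0 (.arrow σ .base)
    (andList (((Finset.univ : Finset σ.sem).toList).map
      (fun a => .app (vr 0 (.arrow σ .base)) (q a))))

mutual
  /-- The quote function `↓σ` together with the identity term `≐σ`. -/
  noncomputable def quoteEq : (σ : Ty) → ((σ.sem → Tm) × Tm)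
    | .base =>
        (fun a => quoteBodyAux .base PUnit.unit a,
         .lam 0 .base (.lam 1 .base (equivTm (vr 0 .base) (vr 1 .base))))
    | .arrow σ τ =>
        (fun a => quoteBodyAux (.arrow σ τ) ((quoteEq σ, argData τ) : ArgData (σ :: τ.args)) a,
         .lam 0 (.arrow σ τ) (.lam 1 (.arrow σ τ)
           (.app (allTmAux σ (quoteEq σ).1)
             (.lam 2 σ
               (.app (.app (quoteEq τ).2
                  (.app (vr 0 (.arrow σ τ)) (vr 2 σ)))
                (.app (vr 1 (.arrow σ τ)) (vr 2 σ)))))))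
  /-- Quote/identity data for all argument types of a type. -/
  noncomputable def argData : (σ : Ty) → ArgData σ.args
    | .base => PUnit.unit
    | .arrow σ τ => ((quoteEq σ, argData τ) : ArgData (σ :: τ.args))
end

/-- The quote function `↓σ : Bσ → Λ`. -/
noncomputable def quote (σ : Ty) (a : σ.sem) : Tm := (quoteEq σ).1 a

/-- The term `≐σ : σσB` denoting the identity predicate on `Bσ`. -/
noncomputable def eqTm (σ : Ty) : Tm := (quoteEq σ).2

/-- The term `∀σ : (σB)B`. -/
noncomputable def allTm (σ : Ty) : Tm := allTmAux σ (quote σ)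


/-- Propositional formulas: `s ::= x | ⊥ | s → s` with `x` a variable of type `B`. -/
inductive Propositional : Tm → Prop
  | var (n : ℕ) : Propositional (vr n .base)
  | bot : Propositional botTm
  | imp {s t} : Propositional s → Propositional t → Propositional (impTm s t)

/-- A type-respecting substitution of terms for variables. -/
def IsSubstitution (ρ : ℕ × Ty → Tm) : Prop := ∀ n σ, HasTy (ρ (n, σ)) σ

/-- A formula is tautologous if it is a substitution instance of a tautology
(a valid propositional formula). -/
def Tautologous (s : Tm) : Prop :=
  ∃ t ρ, Propositional t ∧ ValidFml t ∧ IsSubstitution ρ ∧ s = substAux ρ t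

/-- The proof system: Triv, Weak, Ded, MP, DN, Lam and Boolean replacement (BR).
Sequents consist of a finite set of formulas and a formula. -/
inductive Ded : Finset Tm → Tm → Prop
  | triv {A s} : (∀ t ∈ A, HasTy t .base) → HasTy s .base → Ded (insert s A) s
  | weak {A s t} : HasTy s .base → Ded A t → Ded (insert s A) t
  | ded {A s t} : Ded (insert s A) t → Ded A (impTm s t)
  | mp {A s t} : Ded A (impTm s t) → Ded A s → Ded A t
  | dn {A s} : Ded A (negTm (negTm s)) → Ded A s
  | lam {A s t} : Ded A s → LamEq s t → HasTy t .base → Ded A t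
  | br {A s t} (C : Ctx) : C.Admissible A → Ded A (equivTm s t) →
      Ded A (C.fill s) → HasTy (C.fill t) .base → Ded A (C.fill t)


/-- `All_σ`: for all variables `f : σB` and `x : σ`, `{∀σ f} ⊢ f x`. -/
def AllP (σ : Ty) : Prop :=
  ∀ nf nx : ℕ,
    Ded {Tm.app (allTm σ) (vr nf (.arrow σ .base))}
      (Tm.app (vr nf (.arrow σ .base)) (vr nx σ))

/-- `Enum_σ`: for every variable `x : σ`, `⊢ ⋁_{a ∈ Bσ} (↓σ a) ≐σ x`. -/
def EnumP (σ : Ty) : Prop :=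
  ∀ n : ℕ, Ded ∅ (orList (((Finset.univ : Finset σ.sem).toList).map
    (fun a => Tm.app (Tm.app (eqTm σ) (quote σ a)) (vr n σ))))

/-- `Rep_σ`: replacement with respect to equations `s ≐σ t` in contexts admissible
for the assumptions. -/
def RepP (σ : Ty) : Prop :=
  ∀ (A : Finset Tm) (s t : Tm) (C : Ctx), (∀ u ∈ A, HasTy u .base) →
    HasTy s σ → HasTy t σ → C.Admissible A →
    Ded A (Tm.app (Tm.app (eqTm σ) s) t) → Ded A (C.fill s) → Ded A (C.fill t)


/-! ### Typing of connectives -/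

lemma hasTy_bot : HasTy botTm .base := HasTy.name .bot

lemma hasTy_imp {s t : Tm} (hs : HasTy s .base) (ht : HasTy t .base) :
    HasTy (impTm s t) .base :=
  HasTy.app (HasTy.app (HasTy.name .imp) hs) ht

lemma hasTy_top : HasTy topTm .base := hasTy_imp hasTy_bot hasTy_bot

lemma hasTy_neg {s : Tm} (hs : HasTy s .base) : HasTy (negTm s) .base :=
  hasTy_imp hs hasTy_bot

lemma hasTy_or {s t : Tm} (hs : HasTy s .base) (ht : HasTy t .base) :
    HasTy (orTm s t) .base := hasTy_imp (hasTy_imp hs ht) ht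

lemma hasTy_and {s t : Tm} (hs : HasTy s .base) (ht : HasTy t .base) :
    HasTy (andTm s t) .base := hasTy_neg (hasTy_or (hasTy_neg hs) (hasTy_neg ht))

lemma hasTy_equiv {s t : Tm} (hs : HasTy s .base) (ht : HasTy t .base) :
    HasTy (equivTm s t) .base := hasTy_and (hasTy_imp hs ht) (hasTy_imp ht hs)

lemma hasTy_vr (n : ℕ) (σ : Ty) : HasTy (vr n σ) σ := HasTy.name (.var n σ)

lemma hasTy_andList {l : List Tm} (h : ∀ s ∈ l, HasTy s .base) :
    HasTy (andList l) .base := by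
  induction l with
  | nil => exact hasTy_top
  | cons s l ih =>
      cases l with
      | nil => exact h s (by simp)
      | cons t l =>
          exact hasTy_and (h s (by simp)) (ih (fun u hu => h u (by simp [hu])))

lemma hasTy_orList {l : List Tm} (h : ∀ s ∈ l, HasTy s .base) :
    HasTy (orList l) .base := by
  induction l with
  | nil => exact hasTy_bot
  | cons s l ih =>
      cases l with
      | nil => exact h s (by simp)
      | cons t l =>
          exact hasTy_or (h s (by simp)) (ih (fun u hu => h u (by simp [hu])))

/-! ### Basic derivations -/

lemma ded_hyp {A : Finset Tm} {s : Tm} (hA : ∀ t ∈ A, HasTy t .base) (hs : s ∈ A) :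
    Ded A s := by
  have : insert s A = A := Finset.insert_eq_self.mpr hs
  rw [← this]
  exact Ded.triv hA (hA s hs)

lemma ded_insert {A : Finset Tm} {s t : Tm} (hs : HasTy s .base) (h : Ded A t) :
    Ded (insert s A) t := Ded.weak hs h

lemma ded_cut {A : Finset Tm} {s t : Tm} (h1 : Ded A s) (h2 : Ded (insert s A) t) :
    Ded A t := Ded.mp (Ded.ded h2) h1

lemma ded_exfalso {A : Finset Tm} {s : Tm} (hs : HasTy s .base)
    (h : Ded A botTm) : Ded A s := by
  apply Ded.dn
  apply Ded.ded
  exact ded_insert (hasTy_neg hs) h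

/-- Typing of hypotheses set. -/
lemma hasTyA_insert {A : Finset Tm} {s : Tm} (hs : HasTy s .base)
    (hA : ∀ t ∈ A, HasTy t .base) : ∀ t ∈ insert s A, HasTy t .base := by
  intro t ht
  rcases Finset.mem_insert.mp ht with h | h
  · subst h; exact hs
  · exact hA t h

lemma ded_exch {A : Finset Tm} {a b t : Tm}
    (h : Ded (insert a (insert b A)) t) : Ded (insert b (insert a A)) t := by
  rwa [Finset.insert_comm]

/-- and-elimination, left. -/
lemma ded_and_left {A : Finset Tm} {s t : Tm} (hA : ∀ u ∈ A, HasTy u .base)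
    (hs : HasTy s .base) (ht : HasTy t .base) (h : Ded A (andTm s t)) : Ded A s := by
  apply Ded.dn
  apply Ded.ded
  -- B := insert ¬s A ⊢ ⊥
  have hB : ∀ u ∈ insert (negTm s) A, HasTy u .base := hasTyA_insert (hasTy_neg hs) hA
  apply Ded.mp (s := orTm (negTm s) (negTm t))
  · exact ded_insert (hasTy_neg hs) h
  · -- B ⊢ ¬s ∨ ¬t
    apply Ded.ded
    apply Ded.mp (s := negTm s)
    · exact Ded.triv hB (hasTy_imp (hasTy_neg hs) (hasTy_neg ht))
    · exact ded_insert (hasTy_imp (hasTy_neg hs) (hasTy_neg ht))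
        (Ded.triv hA (hasTy_neg hs))

/-- and-elimination, right. -/
lemma ded_and_right {A : Finset Tm} {s t : Tm} (hA : ∀ u ∈ A, HasTy u .base)
    (hs : HasTy s .base) (ht : HasTy t .base) (h : Ded A (andTm s t)) : Ded A t := by
  apply Ded.dn
  apply Ded.ded
  have hB : ∀ u ∈ insert (negTm t) A, HasTy u .base := hasTyA_insert (hasTy_neg ht) hA
  apply Ded.mp (s := orTm (negTm s) (negTm t))
  · exact ded_insert (hasTy_neg ht) h
  · apply Ded.ded
    exact ded_insert (hasTy_imp (hasTy_neg hs) (hasTy_neg ht))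
      (Ded.triv hA (hasTy_neg ht))

/-- or-elimination. -/
lemma ded_or_elim {A : Finset Tm} {s t u : Tm} (hA : ∀ v ∈ A, HasTy v .base)
    (hs : HasTy s .base) (ht : HasTy t .base) (hu : HasTy u .base)
    (hor : Ded A (orTm s t)) (h1 : Ded (insert s A) u) (h2 : Ded (insert t A) u) :
    Ded A u := by
  apply Ded.dn
  apply Ded.ded
  -- B := insert ¬u A
  set B := insert (negTm u) A with hBdef
  have hB : ∀ v ∈ B, HasTy v .base := hasTyA_insert (hasTy_neg hu) hA
  have hnu : Ded B (negTm u) := Ded.triv hA (hasTy_neg hu)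
  have hsu : Ded B (impTm s u) := Ded.ded (ded_exch (ded_insert (hasTy_neg hu) h1))
  have htu : Ded B (impTm t u) := Ded.ded (ded_exch (ded_insert (hasTy_neg hu) h2))
  have hst : Ded B (impTm s t) := by
    apply Ded.ded
    apply ded_exfalso ht
    apply Ded.mp (s := u)
    · exact ded_insert hs hnu
    · exact Ded.mp (ded_insert hs hsu) (Ded.triv hB hs)
  have hT : Ded B t := Ded.mp (ded_insert (hasTy_neg hu) hor) hst
  exact Ded.mp hnu (Ded.mp htu hT)

/-- or-list elimination. -/
lemma ded_orList_elim {A : Finset Tm} {u : Tm} (hu : HasTy u .base) :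
    ∀ (l : List Tm), (∀ v ∈ A, HasTy v .base) → (∀ s ∈ l, HasTy s .base) →
    Ded A (orList l) → (∀ s ∈ l, Ded (insert s A) u) → Ded A u := by
  intro l
  induction l generalizing A with
  | nil => intro _ _ h _; exact ded_exfalso hu h
  | cons s l ih =>
      intro hA hl h hall
      cases l with
      | nil => exact ded_cut h (hall s (by simp))
      | cons t l' =>
          have hsb : HasTy s .base := hl s (by simp)
          have hlb : HasTy (orList (t :: l')) .base :=
            hasTy_orList (fun v hv => hl v (by simp [hv]))
          apply ded_or_elim hA hsb hlb hu h (hall s (by simp))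
          apply ih (hasTyA_insert hlb hA) (fun v hv => hl v (by simp [hv]))
            (Ded.triv hA hlb)
          intro v hv
          exact ded_exch (ded_insert hlb (hall v (by simp [hv])))

/-- and-list elimination. -/
lemma ded_andList_elim {A : Finset Tm} (hA : ∀ v ∈ A, HasTy v .base) :
    ∀ (l : List Tm), (∀ s ∈ l, HasTy s .base) →
    Ded A (andList l) → ∀ s ∈ l, Ded A s := by
  intro l
  induction l with
  | nil => intro _ _ s hs; simp at hs
  | cons s l ih =>
      intro hl h v hv
      cases l with
      | nil =>
          simp only [List.mem_singleton] at hv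
          subst hv; exact h
      | cons t l' =>
          have hsb : HasTy s .base := hl s (by simp)
          have hlb : HasTy (andList (t :: l')) .base :=
            hasTy_andList (fun w hw => hl w (by simp [hw]))
          rcases List.mem_cons.mp hv with h1 | h1
          · subst h1; exact ded_and_left hA hsb hlb h
          · exact ih (fun w hw => hl w (by simp [hw]))
              (ded_and_right hA hsb hlb h) v h1



/-! ### Substitution lemmas -/


lemma substAux_var (ρ : ℕ × Ty → Tm) (n : ℕ) (σ : Ty) :
    substAux ρ (vr n σ) = ρ (n, σ) := rfl

lemma substAux_app (ρ : ℕ × Ty → Tm) (s t : Tm) :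
    substAux ρ (.app s t) = .app (substAux ρ s) (substAux ρ t) := rfl

lemma isSubstitution_update {ρ : ℕ × Ty → Tm} {t : Tm} {n : ℕ} {σ : Ty}
    (hρ : IsSubstitution ρ) (ht : HasTy t σ) :
    IsSubstitution (Function.update ρ (n, σ) t) := by
  intro m τ
  by_cases h : (m, τ) = (n, σ)
  · rw [h, Function.update_self]
    cases h; exact ht
  · rw [Function.update_of_ne h]
    exact hρ m τ

lemma isSubstitution_id : IsSubstitution (fun p => vr p.1 p.2) :=
  fun n σ => hasTy_vr n σ

lemma substAux_congr : ∀ (s : Tm) (ρ₁ ρ₂ : ℕ × Ty → Tm),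
    (∀ p ∈ fv s, ρ₁ p = ρ₂ p) → substAux ρ₁ s = substAux ρ₂ s := by
  intro s
  induction s with
  | name x =>
      intro ρ₁ ρ₂ h
      cases x with
      | var n σ => exact h (n, σ) (by simp [fv])
      | bot => rfl
      | imp => rfl
  | app s t ihs iht =>
      intro ρ₁ ρ₂ h
      simp only [substAux_app]
      rw [ihs ρ₁ ρ₂ (fun p hp => h p (by simp [fv, hp])),
          iht ρ₁ ρ₂ (fun p hp => h p (by simp [fv, hp]))]
  | lam n σ s ih =>
      intro ρ₁ ρ₂ h
      have hfv : ∀ p ∈ (fv s).erase (n, σ), ρ₁ p = ρ₂ p := by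
        intro p hp; exact h p (by simpa [fv] using hp)
      have hused : ((fv s).erase (n, σ)).biUnion (fun p => (fv (ρ₁ p)).image Prod.fst)
          = ((fv s).erase (n, σ)).biUnion (fun p => (fv (ρ₂ p)).image Prod.fst) := by
        apply Finset.biUnion_congr rfl
        intro p hp; rw [hfv p hp]
      simp only [substAux]
      rw [hused]
      congr 1
      apply ih
      intro p hp
      by_cases hpe : p = (n, σ)
      · subst hpe; simp
      · rw [Function.update_of_ne hpe, Function.update_of_ne hpe]
        exact hfv p (Finset.mem_erase.mpr ⟨hpe, hp⟩)

lemma hasTy_substAux : ∀ {s : Tm} {τ : Ty}, HasTy s τ → ∀ {ρ : ℕ × Ty → Tm},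
    IsSubstitution ρ → HasTy (substAux ρ s) τ := by
  intro s τ h
  induction h with
  | name x =>
      intro ρ hρ
      cases x with
      | var n σ => exact hρ n σ
      | bot => exact HasTy.name .bot
      | imp => exact HasTy.name .imp
  | lam hs ih =>
      intro ρ hρ
      simp only [substAux]
      exact HasTy.lam (ih (isSubstitution_update hρ (hasTy_vr _ _)))
  | app hs ht ihs iht =>
      intro ρ hρ
      exact HasTy.app (ihs hρ) (iht hρ)

lemma hasTy_lam_inv {n : ℕ} {σ : Ty} {s : Tm} {τ : Ty}
    (h : HasTy (.lam n σ s) τ) : ∃ τ', τ = .arrow σ τ' ∧ HasTy s τ' := by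
  cases h with
  | lam hs => exact ⟨_, rfl, hs⟩

/-- Substituting with a substitution which is the identity on the free variables
yields a λ-equivalent term. -/
lemma lamEq_substAux_id : ∀ (s : Tm) {τ : Ty} (ρ : ℕ × Ty → Tm), HasTy s τ →
    IsSubstitution ρ → (∀ p ∈ fv s, ρ p = vr p.1 p.2) →
    LamEq (substAux ρ s) s := by
  intro s
  induction s with
  | name x =>
      intro τ ρ hty hρ h
      cases x with
      | var n σ =>
          show LamEq (substAux ρ (vr n σ)) (vr n σ)
          rw [substAux_var, h (n, σ) (by simp [fv])]
          exact LamEq.refl (hasTy_vr n σ)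
      | bot => exact LamEq.refl hty
      | imp => exact LamEq.refl hty
  | app s t ihs iht =>
      intro τ ρ hty hρ h
      cases hty with
      | app hs ht =>
          rw [substAux_app]
          have h1 : LamEq (substAux ρ s) s :=
            ihs ρ hs hρ (fun p hp => h p (by simp [fv, hp]))
          have h2 : LamEq (substAux ρ t) t :=
            iht ρ ht hρ (fun p hp => h p (by simp [fv, hp]))
          have hty1 : HasTy (Tm.app (substAux ρ s) (substAux ρ t)) τ :=
            HasTy.app (hasTy_substAux hs hρ) (hasTy_substAux ht hρ)
          have e1 : LamEq (Tm.app (substAux ρ s) (substAux ρ t))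
              (Tm.app s (substAux ρ t)) :=
            LamEq.ctx (Ctx.appL Ctx.hole (substAux ρ t)) h1 hty1
          have hty2 : HasTy (Tm.app s (substAux ρ t)) τ :=
            HasTy.app hs (hasTy_substAux ht hρ)
          have e2 : LamEq (Tm.app s (substAux ρ t)) (Tm.app s t) :=
            LamEq.ctx (Ctx.appR s Ctx.hole) h2 hty2
          exact LamEq.trans e1 e2
  | lam n σ s ih =>
      intro τ ρ hty hρ h
      obtain ⟨τ', hτ, hs⟩ := hasTy_lam_inv hty
      simp only [substAux]
      set used : Finset ℕ :=
        ((fv s).erase (n, σ)).biUnion (fun p => (fv (ρ p)).image Prod.fst) with hused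
      set m : ℕ := used.sup id + 1 with hm
      set ρ' := Function.update ρ (n, σ) (vr m σ) with hρ'
      have hρ'sub : IsSubstitution ρ' := isSubstitution_update hρ (hasTy_vr m σ)
      have hfvs : ∀ p ∈ (fv s).erase (n, σ), ρ p = vr p.1 p.2 := by
        intro p hp; exact h p (by simpa [fv] using hp)
      by_cases hmn : m = n
      · -- ρ' is the identity on fv s
        have hid : ∀ p ∈ fv s, ρ' p = vr p.1 p.2 := by
          intro p hp
          by_cases hpe : p = (n, σ)
          · subst hpe; simp [hρ', hmn]
          · rw [hρ', Function.update_of_ne hpe]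
            exact hfvs p (Finset.mem_erase.mpr ⟨hpe, hp⟩)
        have e := ih ρ' hs hρ'sub hid
        have : LamEq (Tm.lam m σ (substAux ρ' s)) (Tm.lam m σ s) :=
          LamEq.ctx (Ctx.lam m σ Ctx.hole) e
            (HasTy.lam (hasTy_substAux hs hρ'sub))
        rw [← hmn]
        exact this
      · -- alpha renaming
        have hmfree : (m, σ) ∉ fv s := by
          intro hmem
          have hne : (m, σ) ≠ (n, σ) := by simp [hmn]
          have : m ∈ used := by
            rw [hused]
            apply Finset.mem_biUnion.mpr
            refine ⟨(m, σ), Finset.mem_erase.mpr ⟨hne, hmem⟩, ?_⟩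
            rw [hfvs (m, σ) (Finset.mem_erase.mpr ⟨hne, hmem⟩)]
            simp [vr, fv]
          have h2 : m ≤ used.sup id := by simpa using Finset.le_sup (f := id) this
          omega
        have halpha : LamEq (Tm.lam n σ s) (Tm.lam m σ (subst s n σ (vr m σ))) :=
          LamEq.alpha hty hmfree
        have heq : subst s n σ (vr m σ) = substAux ρ' s := by
          apply substAux_congr
          intro p hp
          by_cases hpe : p = (n, σ)
          · subst hpe; simp [hρ']
          · rw [Function.update_of_ne hpe, hρ', Function.update_of_ne hpe]
            exact (hfvs p (Finset.mem_erase.mpr ⟨hpe, hp⟩)).symm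
        rw [heq] at halpha
        exact LamEq.symm halpha



lemma hasTy_vr' (n : ℕ) (σ : Ty) : HasTy (vr n σ) σ := HasTy.name (.var n σ)

lemma hasTy_bot' : HasTy botTm .base := HasTy.name .bot
lemma hasTy_imp' {s t : Tm} (hs : HasTy s .base) (ht : HasTy t .base) :
    HasTy (impTm s t) .base :=
  HasTy.app (HasTy.app (HasTy.name .imp) hs) ht
lemma hasTy_top' : HasTy topTm .base := hasTy_imp' hasTy_bot' hasTy_bot'
lemma hasTy_neg' {s : Tm} (hs : HasTy s .base) : HasTy (negTm s) .base :=
  hasTy_imp' hs hasTy_bot'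
lemma hasTy_or' {s t : Tm} (hs : HasTy s .base) (ht : HasTy t .base) :
    HasTy (orTm s t) .base := hasTy_imp' (hasTy_imp' hs ht) ht
lemma hasTy_and' {s t : Tm} (hs : HasTy s .base) (ht : HasTy t .base) :
    HasTy (andTm s t) .base := hasTy_neg' (hasTy_or' (hasTy_neg' hs) (hasTy_neg' ht))
lemma hasTy_equiv' {s t : Tm} (hs : HasTy s .base) (ht : HasTy t .base) :
    HasTy (equivTm s t) .base := hasTy_and' (hasTy_imp' hs ht) (hasTy_imp' ht hs)
lemma hasTy_andList' {l : List Tm} (h : ∀ s ∈ l, HasTy s .base) :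
    HasTy (andList l) .base := by
  induction l with
  | nil => exact hasTy_top'
  | cons s l ih =>
      cases l with
      | nil => exact h s (by simp)
      | cons t l => exact hasTy_and' (h s (by simp)) (ih (fun u hu => h u (by simp [hu])))
lemma hasTy_orList' {l : List Tm} (h : ∀ s ∈ l, HasTy s .base) :
    HasTy (orList l) .base := by
  induction l with
  | nil => exact hasTy_bot'
  | cons s l ih =>
      cases l with
      | nil => exact h s (by simp)
      | cons t l => exact hasTy_or' (h s (by simp)) (ih (fun u hu => h u (by simp [hu])))

/-! ### fv computations -/

@[simp] lemma fv_bot : fv botTm = ∅ := rfl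
@[simp] lemma fv_impName : fv (Tm.name .imp) = ∅ := rfl
@[simp] lemma fv_vr (n : ℕ) (σ : Ty) : fv (vr n σ) = {(n, σ)} := rfl
@[simp] lemma fv_name_var (n : ℕ) (σ : Ty) : fv (Tm.name (.var n σ)) = {(n, σ)} := rfl
@[simp] lemma fv_app (s t : Tm) : fv (.app s t) = fv s ∪ fv t := rfl
@[simp] lemma fv_lam (n : ℕ) (σ : Ty) (s : Tm) :
    fv (.lam n σ s) = (fv s).erase (n, σ) := rfl
@[simp] lemma fv_imp (s t : Tm) : fv (impTm s t) = fv s ∪ fv t := by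
  simp [impTm]
@[simp] lemma fv_neg (s : Tm) : fv (negTm s) = fv s := by simp [negTm]
@[simp] lemma fv_or (s t : Tm) : fv (orTm s t) = fv s ∪ fv t := by
  ext p; simp [orTm]
@[simp] lemma fv_and (s t : Tm) : fv (andTm s t) = fv s ∪ fv t := by
  simp [andTm]
@[simp] lemma fv_equiv (s t : Tm) : fv (equivTm s t) = fv s ∪ fv t := by
  ext p; simp [equivTm]; tauto

lemma fv_andList_subset {l : List Tm} {X : Finset (ℕ × Ty)}
    (h : ∀ s ∈ l, fv s ⊆ X) : fv (andList l) ⊆ X := by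
  induction l with
  | nil => simp [andList, topTm]
  | cons s l ih =>
      cases l with
      | nil => exact h s (by simp)
      | cons t l =>
          show fv (andTm s (andList (t :: l))) ⊆ X
          rw [fv_and]
          exact Finset.union_subset (h s (by simp))
            (ih (fun u hu => h u (by simp [hu])))

lemma fv_orList_subset {l : List Tm} {X : Finset (ℕ × Ty)}
    (h : ∀ s ∈ l, fv s ⊆ X) : fv (orList l) ⊆ X := by
  induction l with
  | nil => simp [orList]
  | cons s l ih =>
      cases l with
      | nil => exact h s (by simp)
      | cons t l =>
          show fv (orTm s (orList (t :: l))) ⊆ X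
          rw [fv_or]
          exact Finset.union_subset (h s (by simp))
            (ih (fun u hu => h u (by simp [hu])))

/-! ### Quote machinery: typing and closedness -/

def mkArrows : List Ty → Ty
  | [] => .base
  | σ :: l => .arrow σ (mkArrows l)

lemma mkArrows_args : ∀ σ : Ty, mkArrows σ.args = σ := by
  intro σ
  induction σ with
  | base => rfl
  | arrow σ τ ihσ ihτ => simp [Ty.args, mkArrows, ihτ]

def boundSet : List Ty → ℕ → Finset (ℕ × Ty)
  | [], _ => ∅
  | σ :: l, k => insert (k, σ) (boundSet l (k + 1))

lemma hasTy_mkLams : ∀ (l : List Ty) (k : ℕ) (body : Tm), HasTy body .base →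
    HasTy (mkLams l k body) (mkArrows l) := by
  intro l
  induction l with
  | nil => intro k body h; exact h
  | cons σ l ih => intro k body h; exact HasTy.lam (ih (k + 1) body h)

lemma fv_mkLams_subset : ∀ (l : List Ty) (k : ℕ) (body : Tm),
    fv (mkLams l k body) ⊆ fv body \ boundSet l k := by
  intro l
  induction l with
  | nil => intro k body; simp [mkLams, boundSet]
  | cons σ l ih =>
      intro k body
      show (fv (mkLams l (k + 1) body)).erase (k, σ) ⊆ _
      intro p hp
      rw [Finset.mem_erase] at hp
      have := ih (k + 1) body hp.2
      rw [Finset.mem_sdiff] at this ⊢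
      refine ⟨this.1, ?_⟩
      simp only [boundSet, Finset.mem_insert]
      push_neg
      exact ⟨hp.1, this.2⟩

/-- Goodness (typing + closedness) of quote/identity data. -/
def GoodAD : (l : List Ty) → ArgData l → Prop
  | [], _ => True
  | σ :: l, d => (∀ a, HasTy (d.1.1 a) σ ∧ fv (d.1.1 a) = ∅) ∧
      HasTy d.1.2 (.arrow σ (.arrow σ .base)) ∧ fv d.1.2 = ∅ ∧ GoodAD l d.2

lemma eqConj_good : ∀ (l : List Ty) (ad : ArgData l) (k : ℕ) (b : Tup l),
    GoodAD l ad → ∀ u ∈ eqConj l ad k b, HasTy u .base ∧ fv u ⊆ boundSet l k := by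
  intro l
  induction l with
  | nil => intro ad k b _ u hu; simp [eqConj] at hu
  | cons σ l ih =>
      intro ad k b hg u hu
      obtain ⟨d, ds⟩ := ad
      obtain ⟨b1, bs⟩ := b
      simp only [eqConj, List.mem_cons] at hu
      rcases hu with h | h
      · subst h
        constructor
        · exact HasTy.app (HasTy.app hg.2.1 (hasTy_vr' k σ)) (hg.1 b1).1
        · rw [fv_app, fv_app, hg.2.2.1, (hg.1 b1).2]
          simp [boundSet]
      · obtain ⟨h1, h2⟩ := ih ds (k + 1) bs hg.2.2.2 u h
        refine ⟨h1, h2.trans ?_⟩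
        simp [boundSet, Finset.subset_insert]

lemma quoteBodyAux_good (σ : Ty) (ad : ArgData σ.args) (hg : GoodAD σ.args ad)
    (a : σ.sem) : HasTy (quoteBodyAux σ ad a) σ ∧ fv (quoteBodyAux σ ad a) = ∅ := by
  have hbody : ∀ u ∈ (((Finset.univ : Finset (Tup σ.args)).toList.filter
        (fun b => σ.applyTup a b))).map (fun b => andList (eqConj σ.args ad 0 b)),
      HasTy u .base ∧ fv u ⊆ boundSet σ.args 0 := by
    intro u hu
    rw [List.mem_map] at hu
    obtain ⟨b, _, rfl⟩ := hu
    constructor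
    · exact hasTy_andList' (fun w hw => (eqConj_good σ.args ad 0 b hg w hw).1)
    · exact fv_andList_subset (fun w hw => (eqConj_good σ.args ad 0 b hg w hw).2)
  constructor
  · have h : HasTy (quoteBodyAux σ ad a) (mkArrows σ.args) := by
      apply hasTy_mkLams
      exact hasTy_orList' (fun u hu => (hbody u hu).1)
    rwa [mkArrows_args σ] at h
  · apply Finset.subset_empty.mp
    intro p hp
    have h1 := fv_mkLams_subset σ.args 0 _ hp
    rw [Finset.mem_sdiff] at h1
    exact absurd (fv_orList_subset (fun u hu => (hbody u hu).2) h1.1) h1.2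


lemma allTmAux_good (σ : Ty) (q : σ.sem → Tm)
    (hq : ∀ a, HasTy (q a) σ ∧ fv (q a) = ∅) :
    HasTy (allTmAux σ q) (.arrow (.arrow σ .base) .base) ∧ fv (allTmAux σ q) = ∅ := by
  constructor
  · apply HasTy.lam
    apply hasTy_andList'
    intro u hu
    rw [List.mem_map] at hu
    obtain ⟨a, _, rfl⟩ := hu
    exact HasTy.app (hasTy_vr' 0 (.arrow σ .base)) (hq a).1
  · apply Finset.subset_empty.mp
    show (fv (andList _)).erase (0, Ty.arrow σ .base) ⊆ ∅
    intro p hp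
    rw [Finset.mem_erase] at hp
    have h1 : fv (andList ((Finset.univ : Finset σ.sem).toList.map
        (fun a => Tm.app (vr 0 (.arrow σ .base)) (q a)))) ⊆ {(0, Ty.arrow σ .base)} := by
      apply fv_andList_subset
      intro u hu
      rw [List.mem_map] at hu
      obtain ⟨a, _, rfl⟩ := hu
      rw [fv_app, fv_vr, (hq a).2]
      simp
    have := h1 hp.2
    rw [Finset.mem_singleton] at this
    exact absurd this hp.1

theorem quote_good : ∀ σ : Ty,
    (∀ a, HasTy (quote σ a) σ ∧ fv (quote σ a) = ∅) ∧
    (HasTy (eqTm σ) (.arrow σ (.arrow σ .base)) ∧ fv (eqTm σ) = ∅) ∧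
    GoodAD σ.args (argData σ) := by
  intro σ
  induction σ with
  | base =>
      refine ⟨?_, ⟨?_, ?_⟩, trivial⟩
      · intro a
        have := quoteBodyAux_good .base PUnit.unit trivial a
        simpa [quote, quoteEq] using this
      · show HasTy (eqTm .base) _
        simp only [eqTm, quoteEq]
        exact HasTy.lam (HasTy.lam (hasTy_equiv' (hasTy_vr' 0 .base) (hasTy_vr' 1 .base)))
      · show fv (eqTm .base) = ∅
        simp only [eqTm, quoteEq]
        ext p
        simp [vr]
        tauto
  | arrow σ τ ihσ ihτ =>
      have hAD : GoodAD (Ty.arrow σ τ).args (argData (.arrow σ τ)) := by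
        show GoodAD (σ :: τ.args) _
        simp only [argData]
        exact ⟨fun a => ihσ.1 a, ihσ.2.1.1, ihσ.2.1.2, ihτ.2.2⟩
      have hall := allTmAux_good σ (quoteEq σ).1 (fun a => ihσ.1 a)
      refine ⟨?_, ⟨?_, ?_⟩, hAD⟩
      · intro a
        have := quoteBodyAux_good (.arrow σ τ) (argData (.arrow σ τ)) hAD a
        simpa [quote, quoteEq, argData] using this
      · show HasTy (eqTm (.arrow σ τ)) _
        simp only [eqTm, quoteEq]
        apply HasTy.lam
        apply HasTy.lam
        apply HasTy.app hall.1
        apply HasTy.lam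
        exact HasTy.app
          (HasTy.app ihτ.2.1.1
            (HasTy.app (hasTy_vr' 0 (.arrow σ τ)) (hasTy_vr' 2 σ)))
          (HasTy.app (hasTy_vr' 1 (.arrow σ τ)) (hasTy_vr' 2 σ))
      · show fv (eqTm (.arrow σ τ)) = ∅
        simp only [eqTm, quoteEq]
        have h2 : fv (eqTm τ) = ∅ := ihτ.2.1.2
        rw [show (quoteEq τ).2 = eqTm τ from rfl]
        ext p
        simp [hall.2, h2, vr]
        tauto

lemma quote_hasTy (σ : Ty) (a : σ.sem) : HasTy (quote σ a) σ := ((quote_good σ).1 a).1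
lemma quote_closed (σ : Ty) (a : σ.sem) : fv (quote σ a) = ∅ := ((quote_good σ).1 a).2
lemma eqTm_hasTy (σ : Ty) : HasTy (eqTm σ) (.arrow σ (.arrow σ .base)) :=
  (quote_good σ).2.1.1
lemma eqTm_closed (σ : Ty) : fv (eqTm σ) = ∅ := (quote_good σ).2.1.2
lemma allTm_hasTy (σ : Ty) : HasTy (allTm σ) (.arrow (.arrow σ .base) .base) :=
  (allTmAux_good σ (quote σ) (quote_good σ).1).1



/-! ### LamEq congruences -/

lemma lamEq_app_cong {s s' t t' : Tm} {σ τ : Ty}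
    (hs : HasTy s (.arrow σ τ)) (hs' : HasTy s' (.arrow σ τ))
    (ht : HasTy t σ) (ht' : HasTy t' σ)
    (es : LamEq s s') (et : LamEq t t') : LamEq (.app s t) (.app s' t') := by
  have e1 : LamEq (Tm.app s t) (Tm.app s' t) :=
    LamEq.ctx (Ctx.appL Ctx.hole t) es (HasTy.app hs ht)
  have e2 : LamEq (Tm.app s' t) (Tm.app s' t') :=
    LamEq.ctx (Ctx.appR s' Ctx.hole) et (HasTy.app hs' ht)
  exact LamEq.trans e1 e2

lemma lamEq_imp_cong {s s' t t' : Tm}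
    (hs : HasTy s .base) (hs' : HasTy s' .base)
    (ht : HasTy t .base) (ht' : HasTy t' .base)
    (es : LamEq s s') (et : LamEq t t') : LamEq (impTm s t) (impTm s' t') := by
  apply lamEq_app_cong (σ := .base) (τ := .base)
    (HasTy.app (HasTy.name .imp) hs) (HasTy.app (HasTy.name .imp) hs') ht ht' ?_ et
  exact lamEq_app_cong (σ := .base) (τ := .arrow .base .base)
    (HasTy.name .imp) (HasTy.name .imp) hs hs' (LamEq.refl (HasTy.name .imp)) es

lemma lamEq_neg_cong {s s' : Tm} (hs : HasTy s .base) (hs' : HasTy s' .base)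
    (es : LamEq s s') : LamEq (negTm s) (negTm s') :=
  lamEq_imp_cong hs hs' hasTy_bot hasTy_bot es (LamEq.refl hasTy_bot)

lemma lamEq_or_cong {s s' t t' : Tm}
    (hs : HasTy s .base) (hs' : HasTy s' .base)
    (ht : HasTy t .base) (ht' : HasTy t' .base)
    (es : LamEq s s') (et : LamEq t t') : LamEq (orTm s t) (orTm s' t') :=
  lamEq_imp_cong (hasTy_imp hs ht) (hasTy_imp hs' ht') ht ht'
    (lamEq_imp_cong hs hs' ht ht' es et) et

lemma lamEq_and_cong {s s' t t' : Tm}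
    (hs : HasTy s .base) (hs' : HasTy s' .base)
    (ht : HasTy t .base) (ht' : HasTy t' .base)
    (es : LamEq s s') (et : LamEq t t') : LamEq (andTm s t) (andTm s' t') :=
  lamEq_neg_cong (hasTy_or (hasTy_neg hs) (hasTy_neg ht))
    (hasTy_or (hasTy_neg hs') (hasTy_neg ht'))
    (lamEq_or_cong (hasTy_neg hs) (hasTy_neg hs') (hasTy_neg ht) (hasTy_neg ht')
      (lamEq_neg_cong hs hs' es) (lamEq_neg_cong ht ht' et))

lemma lamEq_andList_map {α : Type*} : ∀ (L : List α) (g h : α → Tm),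
    (∀ a ∈ L, HasTy (g a) .base) → (∀ a ∈ L, HasTy (h a) .base) →
    (∀ a ∈ L, LamEq (g a) (h a)) →
    LamEq (andList (L.map g)) (andList (L.map h)) := by
  intro L
  induction L with
  | nil => intro g h _ _ _; exact LamEq.refl hasTy_top
  | cons a L ih =>
      intro g h hg hh e
      cases L with
      | nil => exact e a (by simp)
      | cons b L =>
          show LamEq (andTm (g a) (andList ((b :: L).map g)))
            (andTm (h a) (andList ((b :: L).map h)))
          have tg : HasTy (andList ((b :: L).map g)) .base := by
            apply hasTy_andList
            intro u hu
            rw [List.mem_map] at hu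
            obtain ⟨c, hc, rfl⟩ := hu
            exact hg c (by simp [hc])
          have th : HasTy (andList ((b :: L).map h)) .base := by
            apply hasTy_andList
            intro u hu
            rw [List.mem_map] at hu
            obtain ⟨c, hc, rfl⟩ := hu
            exact hh c (by simp [hc])
          exact lamEq_and_cong (hg a (by simp)) (hh a (by simp)) tg th
            (e a (by simp))
            (ih g h (fun c hc => hg c (by simp [hc]))
              (fun c hc => hh c (by simp [hc]))
              (fun c hc => e c (by simp [hc])))

/-! ### Beta computation for `allTm` -/

lemma substAux_andTm (ρ : ℕ × Ty → Tm) (s t : Tm) :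
    substAux ρ (andTm s t) = andTm (substAux ρ s) (substAux ρ t) := rfl

lemma substAux_andList (ρ : ℕ × Ty → Tm) : ∀ l : List Tm,
    substAux ρ (andList l) = andList (l.map (substAux ρ)) := by
  intro l
  induction l with
  | nil => rfl
  | cons s l ih =>
      cases l with
      | nil => rfl
      | cons t l =>
          show substAux ρ (andTm s (andList (t :: l))) = _
          rw [substAux_andTm, ih]
          rfl

lemma allTm_beta (σ : Ty) (nf : ℕ) :
    LamEq (.app (allTm σ) (vr nf (.arrow σ .base)))
      (andList (((Finset.univ : Finset σ.sem).toList).map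
        (fun a => Tm.app (vr nf (.arrow σ .base)) (quote σ a)))) := by
  set F : Ty := .arrow σ .base with hF
  set f : Tm := vr nf F with hf
  set L : List σ.sem := (Finset.univ : Finset σ.sem).toList with hL
  set body : Tm := andList (L.map (fun a => Tm.app (vr 0 F) (quote σ a))) with hbody
  have hbodyTy : HasTy body .base := by
    apply hasTy_andList
    intro u hu
    rw [List.mem_map] at hu
    obtain ⟨a, _, rfl⟩ := hu
    exact HasTy.app (hasTy_vr 0 F) (quote_hasTy σ a)
  have hAllEq : allTm σ = Tm.lam 0 F body := rfl
  have hAppTy : HasTy (Tm.app (Tm.lam 0 F body) f) .base :=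
    HasTy.app (HasTy.lam hbodyTy) (hasTy_vr nf F)
  have step1 : LamEq (Tm.app (Tm.lam 0 F body) f) (subst body 0 F f) :=
    LamEq.beta hAppTy
  set ρ : ℕ × Ty → Tm := Function.update (fun p => vr p.1 p.2) (0, F) f with hρ
  have hρsub : IsSubstitution ρ :=
    isSubstitution_update isSubstitution_id (hasTy_vr nf F)
  have step2 : subst body 0 F f =
      andList (L.map (fun a => Tm.app f (substAux ρ (quote σ a)))) := by
    show substAux ρ body = _
    rw [hbody, substAux_andList, List.map_map]
    congr 1
    apply List.map_congr_left
    intro a _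
    show Tm.app (substAux ρ (vr 0 F)) (substAux ρ (quote σ a)) = _
    rw [substAux_var]
    congr 1
    exact Function.update_self _ _ _
  have step3 : LamEq (andList (L.map (fun a => Tm.app f (substAux ρ (quote σ a)))))
      (andList (L.map (fun a => Tm.app f (quote σ a)))) := by
    apply lamEq_andList_map
    · intro a _
      exact HasTy.app (hasTy_vr nf F) (hasTy_substAux (quote_hasTy σ a) hρsub)
    · intro a _
      exact HasTy.app (hasTy_vr nf F) (quote_hasTy σ a)
    · intro a _
      apply lamEq_app_cong (hasTy_vr nf F) (hasTy_vr nf F)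
        (hasTy_substAux (quote_hasTy σ a) hρsub) (quote_hasTy σ a)
        (LamEq.refl (hasTy_vr nf F))
      apply lamEq_substAux_id (quote σ a) ρ (quote_hasTy σ a) hρsub
      intro p hp
      rw [quote_closed σ a] at hp
      exact absurd hp (Finset.notMem_empty p)
  rw [hAllEq]
  exact LamEq.trans step1 (step2 ▸ step3)

theorem enum_rep_imp_all' (σ : Ty) (hE : EnumP σ) (hR : RepP σ) : AllP σ := by
  intro nf nx
  set F : Ty := .arrow σ .base with hF
  set f : Tm := vr nf F with hf
  set x : Tm := vr nx σ with hx
  set L : List σ.sem := (Finset.univ : Finset σ.sem).toList with hL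
  set A : Finset Tm := {Tm.app (allTm σ) f} with hA
  have htyTop : HasTy (Tm.app (allTm σ) f) .base :=
    HasTy.app (allTm_hasTy σ) (hasTy_vr nf F)
  have hAty : ∀ t ∈ A, HasTy t .base := by
    intro t ht
    rw [hA, Finset.mem_singleton] at ht
    subst ht; exact htyTop
  have hAins : A = insert (Tm.app (allTm σ) f) ∅ := by simp [hA]
  have h0 : Ded A (Tm.app (allTm σ) f) := by
    rw [hAins]
    exact Ded.triv (by simp) htyTop
  have htyand : HasTy (andList (L.map (fun a => Tm.app f (quote σ a)))) .base := by
    apply hasTy_andList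
    intro u hu
    rw [List.mem_map] at hu
    obtain ⟨a, _, rfl⟩ := hu
    exact HasTy.app (hasTy_vr nf F) (quote_hasTy σ a)
  have h1 : Ded A (andList (L.map (fun a => Tm.app f (quote σ a)))) :=
    Ded.lam h0 (allTm_beta σ nf) htyand
  have h2 : ∀ a : σ.sem, Ded A (Tm.app f (quote σ a)) := by
    intro a
    apply ded_andList_elim hAty _ ?_ h1
    · exact List.mem_map.mpr ⟨a, Finset.mem_toList.mpr (Finset.mem_univ a), rfl⟩
    · intro u hu
      rw [List.mem_map] at hu
      obtain ⟨b, _, rfl⟩ := hu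
      exact HasTy.app (hasTy_vr nf F) (quote_hasTy σ b)
  -- the disjunction from Enum
  have hDty : ∀ a : σ.sem, HasTy (Tm.app (Tm.app (eqTm σ) (quote σ a)) x) .base :=
    fun a => HasTy.app (HasTy.app (eqTm_hasTy σ) (quote_hasTy σ a)) (hasTy_vr nx σ)
  have hdisj : Ded A (orList (L.map
      (fun a => Tm.app (Tm.app (eqTm σ) (quote σ a)) x))) := by
    rw [hAins]
    exact Ded.weak htyTop (hE nx)
  -- eliminate the disjunction
  apply ded_orList_elim (HasTy.app (hasTy_vr nf F) (hasTy_vr nx σ)) _ hAty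
    (fun u hu => by
      rw [List.mem_map] at hu
      obtain ⟨a, _, rfl⟩ := hu
      exact hDty a) hdisj
  · intro u hu
    rw [List.mem_map] at hu
    obtain ⟨a, _, rfl⟩ := hu
    set A' : Finset Tm := insert (Tm.app (Tm.app (eqTm σ) (quote σ a)) x) A with hA'
    have hA'ty : ∀ t ∈ A', HasTy t .base := hasTyA_insert (hDty a) hAty
    have hadm : (Ctx.appR f Ctx.hole).Admissible A' := by
      intro p _ hcap
      exact hcap
    have hEq : Ded A' (Tm.app (Tm.app (eqTm σ) (quote σ a)) x) :=
      Ded.triv hAty (hDty a)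
    have hCs : Ded A' (Tm.app f (quote σ a)) := Ded.weak (hDty a) (h2 a)
    exact hR A' (quote σ a) x (Ctx.appR f Ctx.hole) hA'ty (quote_hasTy σ a)
      (hasTy_vr nx σ) hadm hEq hCs



/-- if `Enum_σ` and `Rep_σ` hold, then `All_σ` holds. -/
theorem enum_rep_imp_all (σ : Ty) (hE : EnumP σ) (hR : RepP σ) : AllP σ := by
  exact enum_rep_imp_all' σ hE hR

end PTT
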